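/- Let Ω ⊂ ℝⁿ be bounded, b > 0, β > 0, γ := β/b. Suppose f : L²(Ω) → ℝ and u_γ ∈ U_ad := {v ∈ L²(Ω) : |v(x)| ≤ b a.e.} is a global minimizer of u ↦ f(u) + γ‖u‖_{L¹(Ω)} over U_ad, and u_γ(x) ∈ {-b, 0, b} for a.e. x. Then u_γ is a global minimizer of u ↦ f(u) + β‖u‖₀ over U_ad, where ‖u‖₀ := meas{x : u(x) ≠ 0}. -/

import Mathlib

open MeasureTheory Set

/-- The admissible set `U_ad = {u : |u(x)| ≤ b a.e. on Ω}` (of a.e.-measurable functions). -/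
def Uad {n : ℕ} (Ω : Set (Fin n → ℝ)) (b : ℝ) : Set ((Fin n → ℝ) → ℝ) :=
  {u | AEStronglyMeasurable u (volume.restrict Ω) ∧
       ∀ᵐ x ∂volume.restrict Ω, |u x| ≤ b}

/-!
Since `|u| ≤ b` on `U_ad`, `γ‖u‖_{L¹} ≤ γ b ‖u‖₀ = β‖u‖₀` for every admissible `u`, with
equality when `|u|` only takes the values `0` and `b`. So at `u_γ` the two objectives agree,
and for any admissible `u` the `L⁰` objective dominates the `L¹` objective, which is at
least its value at `u_γ`.
-/

section
variable {α : Type*} [MeasurableSpace α] {μ : Measure α} {u : α → ℝ} {b : ℝ}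

theorem integral_abs_le_mul_measureReal_ne_zero (hfin : μ {x | u x ≠ 0} ≠ ⊤)
    (hu : ∀ᵐ x ∂μ, |u x| ≤ b) : ∫ x, |u x| ∂μ ≤ b * μ.real {x | u x ≠ 0} :=
  calc ∫ x, |u x| ∂μ = ∫ x in {x | u x ≠ 0}, |u x| ∂μ := by
        have hsupp : Function.support (fun x ↦ |u x|) = {x | u x ≠ 0} := by ext; simp
        rw [← hsupp, setIntegral_support]
    _ ≤ ∫ _ in {x | u x ≠ 0}, b ∂μ :=
        integral_mono_of_nonneg (.of_forall fun x ↦ abs_nonneg (u x))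
          (integrableOn_const hfin) (ae_restrict_of_ae hu)
    _ = b * μ.real {x | u x ≠ 0} := by rw [setIntegral_const, smul_eq_mul, mul_comm]

theorem integral_abs_eq_mul_measureReal_ne_zero (hu : AEStronglyMeasurable u μ) (hb : 0 ≤ b)
    (hvals : ∀ᵐ x ∂μ, u x = -b ∨ u x = 0 ∨ u x = b) :
    ∫ x, |u x| ∂μ = b * μ.real {x | u x ≠ 0} := by
  have hS : NullMeasurableSet {x | u x ≠ 0} μ :=
    hu.aemeasurable.nullMeasurable (measurableSet_singleton 0).compl
  calc ∫ x, |u x| ∂μ = ∫ x, {x | u x ≠ 0}.indicator (fun _ ↦ b) x ∂μ := by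
        refine integral_congr_ae (hvals.mono fun x hx ↦ ?_)
        by_cases h0 : u x = 0
        · simp [h0]
        · rw [indicator_of_mem h0]
          rcases hx with h | h | h <;> simp_all [abs_of_nonneg hb]
    _ = b * μ.real {x | u x ≠ 0} := by
        rw [integral_indicator₀ hS, setIntegral_const, smul_eq_mul, mul_comm]

theorem Measure.restrict_apply_setOf_ne_zero {s : Set α}
    (hu : AEStronglyMeasurable u (μ.restrict s)) :
    μ.restrict s {x | u x ≠ 0} = μ {x ∈ s | u x ≠ 0} := by
  have hS : NullMeasurableSet {x | u x ≠ 0} (μ.restrict s) :=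
    hu.aemeasurable.nullMeasurable (measurableSet_singleton 0).compl
  rw [Measure.restrict_apply₀ hS, inter_comm]
  rfl

end

theorem integral_abs_le_of_mem_Uad {n : ℕ} {Ω : Set (Fin n → ℝ)} {b : ℝ} {u : (Fin n → ℝ) → ℝ}
    (hΩb : Bornology.IsBounded Ω) (hu : u ∈ Uad Ω b) :
    ∫ x in Ω, |u x| ≤ b * (volume {x ∈ Ω | u x ≠ 0}).toReal := by
  have : IsFiniteMeasure (volume.restrict Ω) := isFiniteMeasure_restrict.2 hΩb.measure_lt_top.ne
  rw [← Measure.restrict_apply_setOf_ne_zero hu.1]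
  exact integral_abs_le_mul_measureReal_ne_zero (measure_ne_top _ _) hu.2

theorem L1_solution_solves_L0 {n : ℕ} (Ω : Set (Fin n → ℝ))
    (hΩb : Bornology.IsBounded Ω)
    (b β : ℝ) (hb : 0 < b) (hβ : 0 < β)
    (f : ((Fin n → ℝ) → ℝ) → ℝ) (uγ : (Fin n → ℝ) → ℝ)
    (huγ : uγ ∈ Uad Ω b)
    (hvals : ∀ᵐ x ∂volume.restrict Ω, uγ x = -b ∨ uγ x = 0 ∨ uγ x = b)
    (hmin : ∀ u ∈ Uad Ω b,
      f uγ + (β / b) * ∫ x in Ω, |uγ x| ≤ f u + (β / b) * ∫ x in Ω, |u x|) :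
    ∀ u ∈ Uad Ω b,
      f uγ + β * (volume {x ∈ Ω | uγ x ≠ 0}).toReal ≤
        f u + β * (volume {x ∈ Ω | u x ≠ 0}).toReal := by
  intro u hu
  have hγ : (β / b) * ∫ x in Ω, |uγ x| = β * (volume {x ∈ Ω | uγ x ≠ 0}).toReal := by
    rw [← Measure.restrict_apply_setOf_ne_zero huγ.1, ← measureReal_def,
      integral_abs_eq_mul_measureReal_ne_zero huγ.1 hb.le hvals]
    field_simp
  have hu_le : (β / b) * ∫ x in Ω, |u x| ≤ β * (volume {x ∈ Ω | u x ≠ 0}).toReal :=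
    calc (β / b) * ∫ x in Ω, |u x|
        ≤ (β / b) * (b * (volume {x ∈ Ω | u x ≠ 0}).toReal) := by
          gcongr
          exact integral_abs_le_of_mem_Uad hΩb hu
      _ = β * (volume {x ∈ Ω | u x ≠ 0}).toReal := by field_simp
  linarith [hmin u hu]
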